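/- arXiv:math/0502184 — 5 statements merged into one kernel-verified Lean document; each statement's English description precedes it below -/
import Mathlib

section
/- In a symmetric monoidal closed category, if the object X is dualizable, then for all objects Y and Z the canonical map ν : F(X, Y) ∧ Z → F(X, Y ∧ Z) is an isomorphism. -/
set_option linter.unusedSectionVars false
set_option maxHeartbeats 1000000


open CategoryTheory MonoidalCategory MonoidalClosed

universe v u

variable {C : Type u} [Category.{v} C] [MonoidalCategory C] [SymmetricCategory C]
  [MonoidalClosed C]

/-- The functional dual `D X = F(X, S)`. -/
noncomputable def Dual (X : C) : C := (ihom X).obj (𝟙_ C)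

/-- The canonical map `ν : F(X, Y) ⊗ Z ⟶ F(X, Y ⊗ Z)`, adjoint to the evaluation composite
`X ⊗ (F(X,Y) ⊗ Z) ⟶ (X ⊗ F(X,Y)) ⊗ Z ⟶ Y ⊗ Z`. -/
noncomputable def nuMap (X Y Z : C) : (ihom X).obj Y ⊗ Z ⟶ (ihom X).obj (Y ⊗ Z) :=
  MonoidalClosed.curry ((α_ X ((ihom X).obj Y) Z).inv ≫ (((ihom.ev X).app Y) ▷ Z))

/-- `X` is dualizable if the canonical map `ν : D X ⊗ X ⟶ F(X, S ⊗ X)` is an isomorphism. -/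
noncomputable def Dualizable (X : C) : Prop := IsIso (nuMap X (𝟙_ C) X)

section Aux

variable (X : C)

/-- Abstract coherence chase used for the second triangle identity. -/
lemma T2chase (D : C) (E : X ⊗ D ⟶ 𝟙_ C) (η : 𝟙_ C ⟶ D ⊗ X)
    (hT1 : (X ◁ η) ≫ (α_ X D X).inv ≫ (E ▷ X) ≫ (λ_ X).hom = (ρ_ X).hom) :
    X ◁ ((λ_ D).inv ≫ (η ▷ D) ≫ (α_ D X D).hom ≫ (D ◁ E) ≫ (ρ_ D).hom) ≫ E = E := by
  have hswap : ((X ⊗ D) ◁ E) ≫ (ρ_ (X ⊗ D)).hom ≫ E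
      = (E ▷ (X ⊗ D)) ≫ (λ_ (X ⊗ D)).hom ≫ E := by
    calc ((X ⊗ D) ◁ E) ≫ (ρ_ (X ⊗ D)).hom ≫ E
        = ((X ⊗ D) ◁ E) ≫ (E ▷ (𝟙_ C)) ≫ (ρ_ (𝟙_ C)).hom := by monoidal
      _ = (E ▷ (X ⊗ D)) ≫ ((𝟙_ C) ◁ E) ≫ (ρ_ (𝟙_ C)).hom := by rw [whisker_exchange_assoc]
      _ = (E ▷ (X ⊗ D)) ≫ (λ_ (X ⊗ D)).hom ≫ E := by monoidal
  calc X ◁ ((λ_ D).inv ≫ (η ▷ D) ≫ (α_ D X D).hom ≫ (D ◁ E) ≫ (ρ_ D).hom) ≫ E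
      = (X ◁ (λ_ D).inv) ≫ (X ◁ (η ▷ D)) ≫ (X ◁ (α_ D X D).hom) ≫ (α_ X D (X ⊗ D)).inv ≫
        ((X ⊗ D) ◁ E) ≫ (ρ_ (X ⊗ D)).hom ≫ E := by monoidal
    _ = (X ◁ (λ_ D).inv) ≫ (X ◁ (η ▷ D)) ≫ (X ◁ (α_ D X D).hom) ≫ (α_ X D (X ⊗ D)).inv ≫
        (E ▷ (X ⊗ D)) ≫ (λ_ (X ⊗ D)).hom ≫ E := by rw [hswap]
    _ = (X ◁ (λ_ D).inv) ≫ (α_ X (𝟙_ C) D).inv ≫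
        (((X ◁ η) ≫ (α_ X D X).inv ≫ (E ▷ X) ≫ (λ_ X).hom) ▷ D) ≫ E := by monoidal
    _ = (X ◁ (λ_ D).inv) ≫ (α_ X (𝟙_ C) D).inv ≫ ((ρ_ X).hom ▷ D) ≫ E := by rw [hT1]
    _ = E := by monoidal

/-- Abstract coherence chase used for `κ ≫ μ = 𝟙`. -/
lemma A1chase (D F W : C) (E : X ⊗ D ⟶ 𝟙_ C) (η : 𝟙_ C ⟶ D ⊗ X) (e : X ⊗ F ⟶ W)
    (hT1 : (X ◁ η) ≫ (α_ X D X).inv ≫ (E ▷ X) ≫ (λ_ X).hom = (ρ_ X).hom) :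
    (X ◁ ((λ_ F).inv ≫ (η ▷ F) ≫ (α_ D X F).hom ≫ (D ◁ e))) ≫
      (α_ X D W).inv ≫ (E ▷ W) ≫ (λ_ W).hom = e := by
  calc (X ◁ ((λ_ F).inv ≫ (η ▷ F) ≫ (α_ D X F).hom ≫ (D ◁ e))) ≫
      (α_ X D W).inv ≫ (E ▷ W) ≫ (λ_ W).hom
      = (X ◁ (λ_ F).inv) ≫ (X ◁ (η ▷ F)) ≫ (X ◁ (α_ D X F).hom) ≫ (α_ X D (X ⊗ F)).inv ≫
        ((X ⊗ D) ◁ e) ≫ (E ▷ W) ≫ (λ_ W).hom := by monoidal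
    _ = (X ◁ (λ_ F).inv) ≫ (X ◁ (η ▷ F)) ≫ (X ◁ (α_ D X F).hom) ≫ (α_ X D (X ⊗ F)).inv ≫
        (E ▷ (X ⊗ F)) ≫ ((𝟙_ C) ◁ e) ≫ (λ_ W).hom := by rw [whisker_exchange_assoc]
    _ = (X ◁ (λ_ F).inv) ≫ (α_ X (𝟙_ C) F).inv ≫
        (((X ◁ η) ≫ (α_ X D X).inv ≫ (E ▷ X) ≫ (λ_ X).hom) ▷ F) ≫ e := by monoidal
    _ = (X ◁ (λ_ F).inv) ≫ (α_ X (𝟙_ C) F).inv ≫ ((ρ_ X).hom ▷ F) ≫ e := by rw [hT1]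
    _ = e := by monoidal

/-- Abstract coherence chase used for `μ ≫ κ = 𝟙`. -/
lemma A2chase (D F W : C) (E : X ⊗ D ⟶ 𝟙_ C) (η : 𝟙_ C ⟶ D ⊗ X)
    (e : X ⊗ F ⟶ W) (m : D ⊗ W ⟶ F)
    (hm : (X ◁ m) ≫ e = (α_ X D W).inv ≫ (E ▷ W) ≫ (λ_ W).hom)
    (hT2 : (λ_ D).inv ≫ (η ▷ D) ≫ (α_ D X D).hom ≫ (D ◁ E) ≫ (ρ_ D).hom = 𝟙 D) :
    m ≫ ((λ_ F).inv ≫ (η ▷ F) ≫ (α_ D X F).hom ≫ (D ◁ e)) = 𝟙 (D ⊗ W) := by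
  calc m ≫ ((λ_ F).inv ≫ (η ▷ F) ≫ (α_ D X F).hom ≫ (D ◁ e))
      = (λ_ (D ⊗ W)).inv ≫ ((𝟙_ C) ◁ m) ≫ (η ▷ F) ≫ (α_ D X F).hom ≫ (D ◁ e) := by monoidal
    _ = (λ_ (D ⊗ W)).inv ≫ (η ▷ (D ⊗ W)) ≫ ((D ⊗ X) ◁ m) ≫ (α_ D X F).hom ≫ (D ◁ e) := by
        rw [whisker_exchange_assoc]
    _ = (λ_ (D ⊗ W)).inv ≫ (η ▷ (D ⊗ W)) ≫ (α_ D X (D ⊗ W)).hom ≫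
        (D ◁ ((X ◁ m) ≫ e)) := by monoidal
    _ = (λ_ (D ⊗ W)).inv ≫ (η ▷ (D ⊗ W)) ≫ (α_ D X (D ⊗ W)).hom ≫
        (D ◁ ((α_ X D W).inv ≫ (E ▷ W) ≫ (λ_ W).hom)) := by rw [hm]
    _ = ((λ_ D).inv ≫ (η ▷ D) ≫ (α_ D X D).hom ≫ (D ◁ E) ≫ (ρ_ D).hom) ▷ W := by monoidal
    _ = 𝟙 (D ⊗ W) := by rw [hT2]; simp

/-- Abstract coherence chase for the composition rule of `ν`. -/
lemma Bchase (Y Z W FY FYZ : C) (N : FY ⊗ Z ⟶ FYZ) (evY : X ⊗ FY ⟶ Y)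
    (evYZ : X ⊗ FYZ ⟶ Y ⊗ Z)
    (hN : (X ◁ N) ≫ evYZ = (α_ X FY Z).inv ≫ (evY ▷ Z)) :
    (X ◁ (N ▷ W)) ≫ (α_ X FYZ W).inv ≫ (evYZ ▷ W) =
      (X ◁ (α_ FY Z W).hom) ≫ (α_ X FY (Z ⊗ W)).inv ≫ (evY ▷ (Z ⊗ W)) ≫ (α_ Y Z W).inv := by
  calc (X ◁ (N ▷ W)) ≫ (α_ X FYZ W).inv ≫ (evYZ ▷ W)
      = (α_ X (FY ⊗ Z) W).inv ≫ (((X ◁ N) ≫ evYZ) ▷ W) := by monoidal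
    _ = (α_ X (FY ⊗ Z) W).inv ≫ (((α_ X FY Z).inv ≫ (evY ▷ Z)) ▷ W) := by rw [hN]
    _ = (X ◁ (α_ FY Z W).hom) ≫ (α_ X FY (Z ⊗ W)).inv ≫ (evY ▷ (Z ⊗ W)) ≫ (α_ Y Z W).inv := by
        monoidal

/-- `μ_W : DX ⊗ W ⟶ F(X,W)`. -/
noncomputable def muMap (W : C) : (ihom X).obj (𝟙_ C) ⊗ W ⟶ (ihom X).obj W :=
  nuMap X (𝟙_ C) W ≫ (ihom X).map (λ_ W).hom

lemma uncurry_nuMap (Y Z : C) : uncurry (nuMap X Y Z) =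
    (α_ X ((ihom X).obj Y) Z).inv ≫ (((ihom.ev X).app Y) ▷ Z) := by
  simp [nuMap]

lemma uncurry_muMap (W : C) : uncurry (muMap X W) =
    (α_ X ((ihom X).obj (𝟙_ C)) W).inv ≫ (((ihom.ev X).app (𝟙_ C)) ▷ W) ≫ (λ_ W).hom := by
  simp [muMap, uncurry_natural_right, uncurry_nuMap]

lemma whiskerLeft_nuMap_ev (Y Z : C) :
    (X ◁ nuMap X Y Z) ≫ (ihom.ev X).app (Y ⊗ Z) =
      (α_ X ((ihom X).obj Y) Z).inv ≫ (((ihom.ev X).app Y) ▷ Z) := by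
  rw [← uncurry_eq, uncurry_nuMap]

lemma whiskerLeft_muMap_ev (W : C) :
    (X ◁ muMap X W) ≫ (ihom.ev X).app W =
      (α_ X ((ihom X).obj (𝟙_ C)) W).inv ≫ (((ihom.ev X).app (𝟙_ C)) ▷ W) ≫ (λ_ W).hom := by
  rw [← uncurry_eq, uncurry_muMap]

lemma isIso_muMap_X (hX : Dualizable X) : IsIso (muMap X X) := by
  letI : IsIso (nuMap X (𝟙_ C) X) := hX
  unfold muMap; infer_instance

/-- The coevaluation `η₀ : 𝟙 ⟶ DX ⊗ X`. -/
noncomputable def etaMap (hX : Dualizable X) : 𝟙_ C ⟶ (ihom X).obj (𝟙_ C) ⊗ X :=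
  letI : IsIso (muMap X X) := isIso_muMap_X X hX
  curry (ρ_ X).hom ≫ inv (muMap X X)

lemma etaMap_mu (hX : Dualizable X) : etaMap X hX ≫ muMap X X = curry (ρ_ X).hom := by
  letI : IsIso (muMap X X) := isIso_muMap_X X hX
  simp [etaMap]

/-- First triangle identity. -/
lemma T1 (hX : Dualizable X) : (X ◁ etaMap X hX) ≫ (α_ X ((ihom X).obj (𝟙_ C)) X).inv ≫
    (((ihom.ev X).app (𝟙_ C)) ▷ X) ≫ (λ_ X).hom = (ρ_ X).hom := by
  have h := congrArg uncurry (etaMap_mu X hX)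
  rwa [uncurry_natural_left, uncurry_muMap, uncurry_curry] at h

/-- Second triangle identity. -/
lemma T2 (hX : Dualizable X) :
    (λ_ ((ihom X).obj (𝟙_ C))).inv ≫ (etaMap X hX ▷ ((ihom X).obj (𝟙_ C))) ≫
      (α_ ((ihom X).obj (𝟙_ C)) X ((ihom X).obj (𝟙_ C))).hom ≫
      (((ihom X).obj (𝟙_ C)) ◁ ((ihom.ev X).app (𝟙_ C))) ≫ (ρ_ ((ihom X).obj (𝟙_ C))).hom =
      𝟙 ((ihom X).obj (𝟙_ C)) := by
  apply uncurry_injective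
  rw [uncurry_eq, uncurry_id_eq_ev]
  exact T2chase X _ _ _ (T1 X hX)

/-- Candidate inverse `κ_W : F(X,W) ⟶ DX ⊗ W` for `μ_W`. -/
noncomputable def kappaMap (hX : Dualizable X) (W : C) :
    (ihom X).obj W ⟶ (ihom X).obj (𝟙_ C) ⊗ W :=
  (λ_ ((ihom X).obj W)).inv ≫ (etaMap X hX ▷ ((ihom X).obj W)) ≫
    (α_ ((ihom X).obj (𝟙_ C)) X ((ihom X).obj W)).hom ≫
    (((ihom X).obj (𝟙_ C)) ◁ ((ihom.ev X).app W))

lemma kappa_mu (hX : Dualizable X) (W : C) : kappaMap X hX W ≫ muMap X W = 𝟙 _ := by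
  apply uncurry_injective
  rw [uncurry_natural_left, uncurry_muMap, uncurry_id_eq_ev]
  exact A1chase X _ _ _ _ _ _ (T1 X hX)

lemma mu_kappa (hX : Dualizable X) (W : C) : muMap X W ≫ kappaMap X hX W = 𝟙 _ := by
  unfold kappaMap
  exact A2chase X _ _ _ _ _ _ _ (whiskerLeft_muMap_ev X W) (T2 X hX)

lemma isIso_muMap (hX : Dualizable X) (W : C) : IsIso (muMap X W) :=
  ⟨kappaMap X hX W, mu_kappa X hX W, kappa_mu X hX W⟩

/-- Composition rule for `ν`. -/
lemma nu_comp (Y Z W : C) : (nuMap X Y Z ▷ W) ≫ nuMap X (Y ⊗ Z) W =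
    (α_ ((ihom X).obj Y) Z W).hom ≫ nuMap X Y (Z ⊗ W) ≫ (ihom X).map (α_ Y Z W).inv := by
  apply uncurry_injective
  rw [uncurry_natural_left, uncurry_natural_left, uncurry_natural_right, uncurry_nuMap,
    uncurry_nuMap]
  simpa only [Category.assoc] using Bchase X Y Z W _ _ _ _ _ (whiskerLeft_nuMap_ev X Y Z)

/-- Naturality of `ν` in the middle variable. -/
lemma nu_natural (Y Y' Z : C) (f : Y ⟶ Y') :
    ((ihom X).map f ▷ Z) ≫ nuMap X Y' Z = nuMap X Y Z ≫ (ihom X).map (f ▷ Z) := by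
  apply uncurry_injective
  rw [uncurry_natural_left, uncurry_natural_right, uncurry_nuMap, uncurry_nuMap]
  simp only [← Category.assoc]
  simp only [Category.assoc]
  calc (X ◁ ((ihom X).map f ▷ Z)) ≫ (α_ X ((ihom X).obj Y') Z).inv ≫
      (((ihom.ev X).app Y') ▷ Z)
      = (α_ X ((ihom X).obj Y) Z).inv ≫
        (((X ◁ (ihom X).map f) ≫ (ihom.ev X).app Y') ▷ Z) := by monoidal
    _ = (α_ X ((ihom X).obj Y) Z).inv ≫ (((ihom.ev X).app Y ≫ f) ▷ Z) := by
        rw [ihom.ev_naturality]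
    _ = (α_ X ((ihom X).obj Y) Z).inv ≫ (((ihom.ev X).app Y) ▷ Z) ≫ (f ▷ Z) := by monoidal

end Aux

/-- if `X` is dualizable, then for all `Y Z` the canonical map
`ν : F(X, Y) ⊗ Z ⟶ F(X, Y ⊗ Z)` is an isomorphism. -/
theorem statement1 (X : C) (hX : Dualizable X) (Y Z : C) : IsIso (nuMap X Y Z) := by
  have hnu1 : ∀ W : C, IsIso (nuMap X (𝟙_ C) W) := fun W => by
    haveI : IsIso (nuMap X (𝟙_ C) W ≫ (ihom X).map (λ_ W).hom) := isIso_muMap X hX W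
    exact IsIso.of_isIso_comp_right (nuMap X (𝟙_ C) W) ((ihom X).map (λ_ W).hom)
  haveI := hnu1 Y
  haveI := hnu1 (Y ⊗ Z)
  haveI h1 : IsIso (nuMap X (𝟙_ C ⊗ Y) Z) := by
    have h := nu_comp X (𝟙_ C) Y Z
    have h2 : nuMap X (𝟙_ C ⊗ Y) Z = inv (nuMap X (𝟙_ C) Y ▷ Z) ≫
        ((α_ ((ihom X).obj (𝟙_ C)) Y Z).hom ≫ nuMap X (𝟙_ C) (Y ⊗ Z) ≫
          (ihom X).map (α_ (𝟙_ C) Y Z).inv) := by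
      rw [← h, IsIso.inv_hom_id_assoc]
    rw [h2]; infer_instance
  have h3 : nuMap X Y Z = inv ((ihom X).map (λ_ Y).hom ▷ Z) ≫
      (nuMap X (𝟙_ C ⊗ Y) Z ≫ (ihom X).map ((λ_ Y).hom ▷ Z)) := by
    rw [← nu_natural X (𝟙_ C ⊗ Y) Y Z (λ_ Y).hom, IsIso.inv_hom_id_assoc]
  rw [h3]; infer_instance
end

section
/- In a symmetric monoidal closed category, if the objects X and Z are dualizable, then for all objects Y and W the smash product map ∧ : F(X, Y) ∧ F(Z, W) → F(X ∧ Z, Y ∧ W) is an isomorphism. -/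
open CategoryTheory MonoidalCategory MonoidalClosed

universe v u

variable {C : Type u} [Category.{v} C] [MonoidalCategory C] [SymmetricCategory C]
  [MonoidalClosed C]

/-- The smash product map `∧ : F(X, Y) ⊗ F(Z, W) ⟶ F(X ⊗ Z, Y ⊗ W)`, adjoint to the composite
`(X ⊗ Z) ⊗ (F(X,Y) ⊗ F(Z,W)) ⟶ (X ⊗ F(X,Y)) ⊗ (Z ⊗ F(Z,W)) ⟶ Y ⊗ W` which interchanges the
middle two factors by the braiding and then applies `ev ⊗ ev`. -/
noncomputable def smashMap (X Y Z W : C) :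
    (ihom X).obj Y ⊗ (ihom Z).obj W ⟶ (ihom (X ⊗ Z)).obj (Y ⊗ W) :=
  MonoidalClosed.curry
    (tensorμ X Z ((ihom X).obj Y) ((ihom Z).obj W) ≫ ((ihom.ev X).app Y ⊗ₘ (ihom.ev Z).app W))

/-!
A dualizable `X` has `F(X, S)` as a left dual: the coevaluation is `ν⁻¹` applied to the adjunct
of the unitor, the first zigzag identity is the adjunct of that definition, and the second one
follows because a map into `F(X, S)` is determined by its adjunct. If `D` is a left dual of `X`,
then `D ⊗ -` and `F(X, -)` are both right adjoint to `X ⊗ -`, so `D ⊗ Y ≅ F(X, Y)`. Under these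
isomorphisms, and the left dual `ᘁZ ⊗ ᘁX` of `X ⊗ Z`, the smash product map becomes a braiding
of factors, hence an isomorphism.
-/

section

variable {𝒞 : Type*} [Category 𝒞] [MonoidalCategory 𝒞]

lemma evaluation_coevaluation_of_whiskerLeft_evaluation_injective {D X : 𝒞}
    (η : 𝟙_ 𝒞 ⟶ D ⊗ X) (ε : X ⊗ D ⟶ 𝟙_ 𝒞)
    (hηε : X ◁ η ≫ (α_ X D X).inv ≫ ε ▷ X = (ρ_ X).hom ≫ (λ_ X).inv)
    (hε : ∀ A : 𝒞, Function.Injective fun f : A ⟶ D => X ◁ f ≫ ε) :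
    η ▷ D ≫ (α_ D X D).hom ≫ D ◁ ε = (λ_ D).hom ≫ (ρ_ D).inv := by
  rw [← cancel_epi (λ_ D).inv, ← cancel_mono (ρ_ D).hom]
  apply hε
  calc X ◁ (((λ_ D).inv ≫ η ▷ D ≫ (α_ D X D).hom ≫ D ◁ ε) ≫ (ρ_ D).hom) ≫ ε
      = 𝟙 _ ⊗≫ (X ◁ η) ▷ D ⊗≫ ((X ⊗ D) ◁ ε ≫ ε ▷ 𝟙_ 𝒞) ⊗≫ 𝟙 _ := by monoidal
    _ = 𝟙 _ ⊗≫ (X ◁ η ≫ (α_ X D X).inv ≫ ε ▷ X) ▷ D ⊗≫ ε ⊗≫ 𝟙 _ := by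
      rw [whisker_exchange]; monoidal
    _ = X ◁ (((λ_ D).inv ≫ (λ_ D).hom ≫ (ρ_ D).inv) ≫ (ρ_ D).hom) ≫ ε := by
      rw [hηε]; monoidal

lemma braiding_hom_whiskerRight_comp_whiskerLeft_cap [SymmetricCategory 𝒞] {Z D : 𝒞}
    (e : Z ⊗ D ⟶ 𝟙_ 𝒞) (A : 𝒞) :
    (β_ Z A).hom ▷ D ≫ (α_ A Z D).hom ≫ A ◁ e =
      (α_ Z A D).hom ≫ Z ◁ (β_ A D).hom ≫ (α_ Z D A).inv ≫ e ▷ A ≫ (λ_ A).hom ≫ (ρ_ A).inv := by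
  have h : A ◁ e = (β_ A (Z ⊗ D)).hom ≫ e ▷ A ≫ (λ_ A).hom ≫ (ρ_ A).inv := by
    rw [← BraidedCategory.braiding_naturality_right_assoc A e]
    simp [braiding_tensorUnit_right]
  rw [h, BraidedCategory.braiding_tensor_right_hom]
  simp only [Category.assoc, Iso.hom_inv_id_assoc]
  rw [← comp_whiskerRight_assoc, SymmetricCategory.symmetry]
  simp

namespace ExactPairing

variable [MonoidalClosed 𝒞]

noncomputable def ihomIso (D V : 𝒞) [ExactPairing D V] : tensorLeft D ≅ ihom V :=
  (tensorLeftAdjunction D V).rightAdjointUniq (ihom.adjunction V)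

lemma uncurry_ihomIso_hom_app (D V B : 𝒞) [ExactPairing D V] :
    uncurry ((ihomIso D V).hom.app B) = (α_ V D B).inv ≫ ε_ D V ▷ B ≫ (λ_ B).hom := by
  rw [uncurry_eq]
  exact ((tensorLeftAdjunction D V).rightAdjointUniq_hom_app_counit (ihom.adjunction V) B).trans
    (by simp [tensorLeftAdjunction, tensorLeftHomEquiv])

end ExactPairing

namespace Dualizable

variable [MonoidalClosed 𝒞] {X : 𝒞}

noncomputable def coevaluation (hX : Dualizable X) : 𝟙_ 𝒞 ⟶ (ihom X).obj (𝟙_ 𝒞) ⊗ X :=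
  curry ((ρ_ X).hom ≫ (λ_ X).inv) ≫ inv (nuMap X (𝟙_ 𝒞) X) (I := show IsIso _ from hX)

lemma coevaluation_comp_nuMap (hX : Dualizable X) :
    hX.coevaluation ≫ nuMap X (𝟙_ 𝒞) X = curry ((ρ_ X).hom ≫ (λ_ X).inv) := by
  have : IsIso (nuMap X (𝟙_ 𝒞) X) := hX
  simp [coevaluation]

lemma coevaluation_evaluation (hX : Dualizable X) :
    X ◁ hX.coevaluation ≫ (α_ _ _ _).inv ≫ (ihom.ev X).app (𝟙_ 𝒞) ▷ X =
      (ρ_ X).hom ≫ (λ_ X).inv := by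
  have h := congrArg uncurry hX.coevaluation_comp_nuMap
  rwa [uncurry_natural_left, nuMap, uncurry_curry, uncurry_curry] at h

noncomputable abbrev hasLeftDual (hX : Dualizable X) : HasLeftDual X where
  leftDual := (ihom X).obj (𝟙_ 𝒞)
  exact :=
    { coevaluation' := hX.coevaluation
      evaluation' := (ihom.ev X).app (𝟙_ 𝒞)
      coevaluation_evaluation' := coevaluation_evaluation hX
      evaluation_coevaluation' :=
        evaluation_coevaluation_of_whiskerLeft_evaluation_injective _ _
          (coevaluation_evaluation hX) fun _ => uncurry_injective }

end Dualizable

end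

section

open ExactPairing

variable {X Z : C}

lemma tensorHom_ihomIso_hom_app_comp_smashMap {D E : C} [ExactPairing D X] [ExactPairing E Z]
    (Y W : C) :
    ((ihomIso D X).hom.app Y ⊗ₘ (ihomIso E Z).hom.app W) ≫ smashMap X Y Z W =
      ((α_ (D ⊗ Y) E W).inv ≫ (β_ (D ⊗ Y) E).hom ▷ W ≫ (α_ E (D ⊗ Y) W).hom ≫
        E ◁ (α_ D Y W).hom ≫ (α_ E D (Y ⊗ W)).inv) ≫
        (ihomIso (E ⊗ D) (X ⊗ Z)).hom.app (Y ⊗ W) := by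
  apply uncurry_injective
  rw [uncurry_natural_left, uncurry_natural_left, smashMap, uncurry_curry,
    uncurry_ihomIso_hom_app, tensorμ_natural_right_assoc, tensorHom_comp_tensorHom,
    ← uncurry_eq, ← uncurry_eq, uncurry_ihomIso_hom_app, uncurry_ihomIso_hom_app,
    ExactPairing.tensor_evaluation]
  change tensorμ X Z (D ⊗ Y) (E ⊗ W) ≫ _ = _
  calc
    _ = 𝟙 _ ⊗≫ X ◁ (((β_ Z (D ⊗ Y)).hom ▷ E ≫ (α_ (D ⊗ Y) Z E).hom ≫ (D ⊗ Y) ◁ ε_ E Z) ▷ W) ⊗≫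
          (((α_ X D Y).inv ≫ ε_ D X ▷ Y ≫ (λ_ Y).hom) ▷ W) ⊗≫ 𝟙 _ := by
      rw [tensorμ, tensorHom_def']; monoidal
    _ = 𝟙 _ ⊗≫ X ◁ (((α_ Z (D ⊗ Y) E).hom ≫ Z ◁ (β_ (D ⊗ Y) E).hom ≫ (α_ Z E (D ⊗ Y)).inv ≫
          ε_ E Z ▷ (D ⊗ Y) ≫ (λ_ (D ⊗ Y)).hom ≫ (ρ_ (D ⊗ Y)).inv) ▷ W) ⊗≫
          (((α_ X D Y).inv ≫ ε_ D X ▷ Y ≫ (λ_ Y).hom) ▷ W) ⊗≫ 𝟙 _ := by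
      rw [braiding_hom_whiskerRight_comp_whiskerLeft_cap]
    _ = _ := by monoidal

theorem isIso_smashMap_of_hasLeftDual [HasLeftDual X] [HasLeftDual Z] (Y W : C) :
    IsIso (smashMap X Y Z W) := by
  have : IsIso (((ihomIso (ᘁX) X).hom.app Y ⊗ₘ (ihomIso (ᘁZ) Z).hom.app W) ≫
      smashMap X Y Z W) := by
    rw [tensorHom_ihomIso_hom_app_comp_smashMap]
    infer_instance
  exact IsIso.of_isIso_comp_left ((ihomIso (ᘁX) X).hom.app Y ⊗ₘ (ihomIso (ᘁZ) Z).hom.app W) _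

end

/-- if `X` and `Z` are dualizable, then for all `Y W` the smash product map
`F(X, Y) ⊗ F(Z, W) ⟶ F(X ⊗ Z, Y ⊗ W)` is an isomorphism. -/
theorem statement3 (X Z : C) (hX : Dualizable X) (hZ : Dualizable Z) (Y W : C) :
    IsIso (smashMap X Y Z W) :=
  letI := hX.hasLeftDual
  letI := hZ.hasLeftDual
  isIso_smashMap_of_hasLeftDual Y W
end

section
/- Let k be a field, m ≥ 1 an integer, and e_1, …, e_m ≥ 1 integers. Let A = k[x_1, …, x_m]/(x_1^{e_1}, …, x_m^{e_m}) be the truncated polynomial algebra and let ε : A → k be the k-algebra homomorphism with ε(x_j) = 0 for all j. Then the left annihilator of the augmentation ideal, {a ∈ A : a·b = 0 for all b ∈ ker ε}, is exactly the one-dimensional k-subspace spanned by the product π = x_1^{e_1−1} · x_2^{e_2−1} ⋯ x_m^{e_m−1}. -/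
/-!
A polynomial lies in `(x_1^{e_1}, …, x_m^{e_m})` iff each monomial of its support is divisible
by some `x_j^{e_j}`. The augmentation ideal is generated by the `x_j`, so `a` annihilates it iff
`a x_j = 0` for all `j`. If a monomial `x^d` with `d < e` componentwise occurs in a lift of `a`
and `a x_i = 0`, then `x^d x_i` must lie in the ideal, forcing `d_i = e_i - 1`; hence the lift is
congruent to a multiple of the top monomial `π`. Conversely `π x_j` is divisible by `x_j^{e_j}`.
-/

open MvPolynomial

noncomputable section

variable (k : Type*) [Field k] (m : ℕ) (e : Fin m → ℕ)

/-- The ideal `(x_1^{e 1}, …, x_m^{e m})` of truncating relations. -/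
def truncIdeal : Ideal (MvPolynomial (Fin m) k) :=
  Ideal.span (Set.range fun j : Fin m => (X j : MvPolynomial (Fin m) k) ^ e j)

/-- The truncated polynomial algebra `A = k[x_1,…,x_m]/(x_1^{e 1}, …, x_m^{e m})`. -/
abbrev TruncAlg := MvPolynomial (Fin m) k ⧸ truncIdeal k m e

/-- The augmentation `ε : A → k`, the `k`-algebra map sending each generator `x j` to `0`;
it is induced by evaluation of polynomials at `0`. -/
def truncAug (he : ∀ j, 1 ≤ e j) : TruncAlg k m e →ₐ[k] k :=
  Ideal.Quotient.liftₐ (truncIdeal k m e) (aeval 0) (by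
    intro a ha
    have h : truncIdeal k m e ≤ RingHom.ker (aeval (0 : Fin m → k)).toRingHom := by
      rw [truncIdeal, Ideal.span_le]
      rintro _ ⟨j, rfl⟩
      have : (0 : k) ^ e j = 0 := zero_pow (Nat.one_le_iff_ne_zero.mp (he j))
      simp [RingHom.mem_ker, this]
    exact h ha)

/-- The class `π` of the product `x_1^{e 1 - 1} ⋯ x_m^{e m - 1}` in `A`. -/
def truncTop : TruncAlg k m e :=
  Ideal.Quotient.mkₐ k (truncIdeal k m e) (∏ j : Fin m, X j ^ (e j - 1))

theorem MvPolynomial.mem_idealOfVars_of_coeff_zero_eq_zero {σ R : Type*} [CommSemiring R]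
    {p : MvPolynomial σ R} (hp : coeff 0 p = 0) : p ∈ idealOfVars σ R := by
  rw [← pow_one (idealOfVars σ R), mem_pow_idealOfVars_iff]
  intro d hd
  rw [Nat.one_le_iff_ne_zero, Ne, Finsupp.degree_eq_zero_iff]
  rintro rfl
  exact mem_support_iff.mp hd hp

def topExp : Fin m →₀ ℕ := Finsupp.equivFunOnFinite.symm fun j => e j - 1

variable {k m e} in
def truncX (j : Fin m) : TruncAlg k m e := Ideal.Quotient.mkₐ k (truncIdeal k m e) (X j)

section

variable {k m e}

@[simp]
lemma topExp_apply (j : Fin m) : topExp m e j = e j - 1 := rfl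

lemma monomial_topExp : monomial (topExp m e) (1 : k) = ∏ j, X j ^ (e j - 1) := by
  rw [monomial_eq, C_1, one_mul, Finsupp.prod_fintype _ _ fun _ => pow_zero _]
  rfl

lemma truncTop_eq_mk_monomial :
    truncTop k m e = Ideal.Quotient.mkₐ k (truncIdeal k m e) (monomial (topExp m e) 1) := by
  rw [truncTop, monomial_topExp]

lemma mem_truncIdeal_iff {p : MvPolynomial (Fin m) k} :
    p ∈ truncIdeal k m e ↔ ∀ d ∈ p.support, ∃ j, e j ≤ d j := by
  have h : truncIdeal k m e =
      Ideal.span ((fun s => monomial s (1 : k)) '' Set.range fun j => Finsupp.single j (e j)) := by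
    rw [truncIdeal, ← Set.range_comp]
    congr 1
    ext q
    simp [Function.comp, X_pow_eq_monomial]
  rw [h, mem_ideal_span_monomial_image]
  simp [Finsupp.single_le_iff]

lemma truncAug_mk (he : ∀ j, 1 ≤ e j) (p : MvPolynomial (Fin m) k) :
    truncAug k m e he (Ideal.Quotient.mkₐ k (truncIdeal k m e) p) = coeff 0 p := by
  rw [truncAug, Ideal.Quotient.mkₐ_eq_mk]
  show (aeval (fun _ => (0 : k))) p = _
  rw [aeval_zero']
  rfl

lemma ker_truncAug (he : ∀ j, 1 ≤ e j) :
    RingHom.ker (truncAug k m e he) = Ideal.span (Set.range truncX) := by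
  apply le_antisymm
  · intro b hb
    obtain ⟨p, rfl⟩ := Ideal.Quotient.mkₐ_surjective k (truncIdeal k m e) b
    rw [RingHom.mem_ker, truncAug_mk] at hb
    have := Ideal.mem_map_of_mem (Ideal.Quotient.mkₐ k (truncIdeal k m e))
      (mem_idealOfVars_of_coeff_zero_eq_zero hb)
    rwa [Ideal.map_span, ← Set.range_comp] at this
  · rw [Ideal.span_le]
    rintro _ ⟨j, rfl⟩
    rw [SetLike.mem_coe, RingHom.mem_ker, truncX, truncAug_mk, coeff_zero_X]

lemma truncTop_ne_zero (he : ∀ j, 1 ≤ e j) : truncTop k m e ≠ 0 := by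
  rw [truncTop_eq_mk_monomial, Ne, Ideal.Quotient.mkₐ_eq_mk, Ideal.Quotient.eq_zero_iff_mem,
    mem_truncIdeal_iff]
  intro h
  obtain ⟨j, hj⟩ := h (topExp m e) (by simp)
  have := he j
  simp only [topExp_apply] at hj
  omega

lemma truncTop_mul_truncX (he : ∀ j, 1 ≤ e j) (j : Fin m) : truncTop k m e * truncX j = 0 := by
  rw [truncTop, truncX, ← map_mul, Ideal.Quotient.mkₐ_eq_mk, Ideal.Quotient.eq_zero_iff_mem]
  refine Ideal.mem_of_dvd _ ?_ (Ideal.subset_span ⟨j, rfl⟩)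
  change X j ^ e j ∣ _
  rw [← pow_sub_one_mul (Nat.one_le_iff_ne_zero.mp (he j))]
  exact mul_dvd_mul_right (Finset.dvd_prod_of_mem
    (fun i => (X i : MvPolynomial (Fin m) k) ^ (e i - 1)) (Finset.mem_univ j)) _

lemma eq_topExp_of_mul_X_mem {p : MvPolynomial (Fin m) k}
    (hp : ∀ i, p * X i ∈ truncIdeal k m e) {d : Fin m →₀ ℕ} (hd : d ∈ p.support)
    (hlt : ∀ j, d j < e j) : d = topExp m e := by
  ext i
  have hcoeff : coeff (d + Finsupp.single i 1) (p * X i) ≠ 0 := by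
    rwa [coeff_mul_X, ← mem_support_iff]
  obtain ⟨j, hj⟩ := mem_truncIdeal_iff.mp (hp i) _ (mem_support_iff.mpr hcoeff)
  obtain rfl | hij := eq_or_ne i j
  · have := hlt i
    simp only [Finsupp.add_apply, Finsupp.single_eq_same] at hj
    simp only [topExp_apply]
    omega
  · simp only [Finsupp.add_apply, Finsupp.single_eq_of_ne hij.symm, add_zero] at hj
    exact absurd hj (hlt j).not_ge

lemma sub_smul_monomial_topExp_mem {p : MvPolynomial (Fin m) k}
    (hp : ∀ i, p * X i ∈ truncIdeal k m e) :
    p - coeff (topExp m e) p • monomial (topExp m e) 1 ∈ truncIdeal k m e := by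
  rw [mem_truncIdeal_iff]
  intro d hd
  by_contra! hlt
  obtain rfl | hne := eq_or_ne d (topExp m e)
  · simp [coeff_monomial] at hd
  · rw [mem_support_iff, coeff_sub, coeff_smul, coeff_monomial, if_neg hne.symm, smul_zero,
      sub_zero, ← mem_support_iff] at hd
    exact hne (eq_topExp_of_mul_X_mem hp hd hlt)

lemma mem_span_truncTop_of_mul_truncX {a : TruncAlg k m e} (ha : ∀ j, a * truncX j = 0) :
    a ∈ Submodule.span k {truncTop k m e} := by
  obtain ⟨p, rfl⟩ := Ideal.Quotient.mkₐ_surjective k (truncIdeal k m e) a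
  have hp : ∀ j, p * X j ∈ truncIdeal k m e := fun j => by
    simpa [truncX, ← map_mul, Ideal.Quotient.eq_zero_iff_mem] using ha j
  rw [Submodule.mem_span_singleton, truncTop_eq_mk_monomial]
  refine ⟨coeff (topExp m e) p, ?_⟩
  rw [← map_smul, Ideal.Quotient.mkₐ_eq_mk]
  exact (Ideal.Quotient.eq.mpr (sub_smul_monomial_topExp_mem hp)).symm

lemma mem_span_truncTop_iff (he : ∀ j, 1 ≤ e j) {a : TruncAlg k m e} :
    a ∈ Submodule.span k {truncTop k m e} ↔ ∀ j, a * truncX j = 0 := by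
  refine ⟨?_, mem_span_truncTop_of_mul_truncX⟩
  rintro ha j
  obtain ⟨c, rfl⟩ := Submodule.mem_span_singleton.mp ha
  rw [smul_mul_assoc, truncTop_mul_truncX he, smul_zero]

end

theorem statement11 (he : ∀ j, 1 ≤ e j) :
    truncTop k m e ≠ 0 ∧
      {a : TruncAlg k m e | ∀ b : TruncAlg k m e, truncAug k m e he b = 0 → a * b = 0} =
        (Submodule.span k {truncTop k m e} : Submodule k (TruncAlg k m e)) := by
  refine ⟨truncTop_ne_zero he, Set.ext fun a => ?_⟩
  calc (∀ b, truncAug k m e he b = 0 → a * b = 0)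
      ↔ a ∈ (RingHom.ker (truncAug k m e he)).annihilator := by
        simp [Submodule.mem_annihilator]
    _ ↔ ∀ j, a * truncX j = 0 := by
        rw [ker_truncAug, Submodule.mem_annihilator_span]
        simp
    _ ↔ a ∈ Submodule.span k {truncTop k m e} := (mem_span_truncTop_iff he).symm
end
end

section
/- Let k be a field, p ≥ 2 an integer and c ∈ k a nonzero element. Let A = k[x]/(x^p − c·x) and let ε : A → k be the k-algebra homomorphism with ε(x) = 0. Then the left annihilator of the augmentation ideal, {a ∈ A : a·b = 0 for all b ∈ ker ε}, is exactly the one-dimensional k-subspace spanned by π = x^{p−1} − c; moreover ε(π) = −c, which is nonzero. -/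
/-!
Since `x^p - c·x = x·π`, the class of `f ∈ k[x]` kills `x` iff `x·π ∣ x·f`, i.e. iff `π ∣ f`,
as `x` is a non-zero-divisor. The augmentation ideal is generated by `x`, so its annihilator is
the ideal `π·A`; and since `π·x = 0`, this ideal is `π·(k + x·A) = k·π`. Finally `ε π = -c` is
read off by evaluating at `0`, and it also shows `π ≠ 0`.
-/

open Polynomial

noncomputable section

variable (k : Type*) [Field k] (p : ℕ) (c : k)

/-- The ideal `(x^p - c·x)`. -/
def relIdeal : Ideal (Polynomial k) :=
  Ideal.span {(X : Polynomial k) ^ p - C c * X}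

/-- The algebra `A = k[x]/(x^p - c·x)`. -/
abbrev RelAlg := Polynomial k ⧸ relIdeal k p c

/-- The augmentation `ε : A → k`, the `k`-algebra map sending `x` to `0`; it is induced by
evaluation of polynomials at `0`. -/
def relAug (hp : 2 ≤ p) : RelAlg k p c →ₐ[k] k :=
  Ideal.Quotient.liftₐ (relIdeal k p c) (aeval 0) (by
    intro a ha
    have h : relIdeal k p c ≤ RingHom.ker (aeval (0 : k)).toRingHom := by
      rw [relIdeal, Ideal.span_le]
      rintro _ rfl
      have h0 : (0 : k) ^ p = 0 := zero_pow (by omega)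
      simp [RingHom.mem_ker, h0]
    exact h ha)

/-- The class `π = x^{p-1} - c` in `A`. -/
def relTop : RelAlg k p c :=
  Ideal.Quotient.mkₐ k (relIdeal k p c) ((X : Polynomial k) ^ (p - 1) - C c)

section QuotientByXMul

variable {R : Type*} [CommRing R] {g : R[X]} {I : Ideal R[X]}

theorem Polynomial.mk_X_mul_mk_eq_zero_iff (hI : I = Ideal.span {X * g}) (f : R[X]) :
    Ideal.Quotient.mk I X * Ideal.Quotient.mk I f = 0 ↔ g ∣ f := by
  subst hI
  rw [← map_mul, Ideal.Quotient.eq_zero_iff_mem, Ideal.mem_span_singleton,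
    isRegular_X.left.dvd_cancel_left]

theorem Polynomial.mk_X_mul_eq_zero_iff_mem_span (hI : I = Ideal.span {X * g})
    (a : R[X] ⧸ I) :
    Ideal.Quotient.mk I X * a = 0 ↔ a ∈ Submodule.span R {Ideal.Quotient.mk I g} := by
  have hXg : Ideal.Quotient.mk I X * Ideal.Quotient.mk I g = 0 :=
    (mk_X_mul_mk_eq_zero_iff hI g).2 dvd_rfl
  rw [Submodule.mem_span_singleton]
  constructor
  · obtain ⟨f, rfl⟩ := Ideal.Quotient.mk_surjective a
    intro hf
    obtain ⟨h, rfl⟩ := (mk_X_mul_mk_eq_zero_iff hI f).1 hf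
    -- `h = x·(h / x) + h(0)`, and the first summand is killed by `g`
    refine ⟨h.coeff 0, ?_⟩
    conv_rhs => rw [← X_mul_divX_add h]
    rw [map_mul, map_add, map_mul, mul_add, ← mul_assoc, mul_comm (Ideal.Quotient.mk I g), hXg,
      zero_mul, zero_add, mul_comm, ← map_mul, ← smul_eq_C_mul]
    exact (map_smul (Ideal.Quotient.mkₐ R I) _ _).symm
  · rintro ⟨r, rfl⟩
    rw [mul_smul_comm, hXg, smul_zero]

end QuotientByXMul

theorem relAug_mk (hp : 2 ≤ p) (f : k[X]) :
    relAug k p c hp (Ideal.Quotient.mk _ f) = f.coeff 0 := by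
  rw [coeff_zero_eq_aeval_zero]
  rfl

theorem relAug_relTop (hp : 2 ≤ p) : relAug k p c hp (relTop k p c) = -c := by
  rw [relTop, Ideal.Quotient.mkₐ_eq_mk, relAug_mk]
  simp [coeff_X_pow, show 0 ≠ p - 1 by omega]

theorem relAug_eq_zero_iff (hp : 2 ≤ p) (b : RelAlg k p c) :
    relAug k p c hp b = 0 ↔ Ideal.Quotient.mk _ X ∣ b := by
  constructor
  · obtain ⟨f, rfl⟩ := Ideal.Quotient.mk_surjective b
    rw [relAug_mk, ← X_dvd_iff]
    exact map_dvd _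
  · rintro ⟨d, rfl⟩
    rw [map_mul, relAug_mk, coeff_X_zero, zero_mul]

theorem relIdeal_eq_span_X_mul (hp : 1 ≤ p) :
    relIdeal k p c = Ideal.span {X * (X ^ (p - 1) - C c)} := by
  rw [relIdeal, mul_sub, ← pow_succ', Nat.sub_add_cancel hp, mul_comm X]

theorem statement12 (hp : 2 ≤ p) (hc : c ≠ 0) :
    relTop k p c ≠ 0 ∧
      {a : RelAlg k p c | ∀ b : RelAlg k p c, relAug k p c hp b = 0 → a * b = 0} =
        (Submodule.span k {relTop k p c} : Submodule k (RelAlg k p c)) ∧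
      relAug k p c hp (relTop k p c) = -c ∧ relAug k p c hp (relTop k p c) ≠ 0 := by
  have hε := relAug_relTop k p c hp
  have hε_ne : relAug k p c hp (relTop k p c) ≠ 0 := hε ▸ neg_ne_zero.2 hc
  refine ⟨fun h ↦ hε_ne (by rw [h, map_zero]), ?_, hε, hε_ne⟩
  ext a
  have hann :
      (∀ b, Ideal.Quotient.mk _ X ∣ b → a * b = 0) ↔ Ideal.Quotient.mk _ X * a = 0 :=
    ⟨fun h ↦ mul_comm a _ ▸ h _ dvd_rfl,
      by rintro h _ ⟨d, rfl⟩; rw [← mul_assoc, mul_comm a, h, zero_mul]⟩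
  simp only [Set.mem_ofPred_eq, SetLike.mem_coe, relAug_eq_zero_iff, hann]
  exact mk_X_mul_eq_zero_iff_mem_span (relIdeal_eq_span_X_mul k p c (by omega)) a
end
end

section
/- Let p be a prime and let q, n be integers with 0 < q < n. For each strictly increasing sequence I = (i_1 < i_2 < ⋯ < i_q) of integers with 0 < i_1 and i_q < n, define ρ(I) = s + 1, where s is the largest element of {0, 1, …, q} such that i_{q−j+1} = n − j for all 1 ≤ j ≤ s (i.e. the final s entries of I are (n−s, …, n−1)). Then the sum Σ_I 2·(p^{i_1} + p^{i_2} + ⋯ + p^{i_q})·(p^{ρ(I)} − 1), taken over all such sequences I, is congruent to 0 modulo 2(p^n − 1). -/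
/-!
Let `p` be a prime and `0 < q < n`.  The strictly increasing sequences
`I = (i_1 < ⋯ < i_q)` with `0 < i_1` and `i_q < n` correspond to the `q`-element subsets of
`{1, …, n-1}`, i.e. to `I ∈ (Finset.Ioo 0 n).powersetCard q`.  For such `I`, define
`ρ(I) = s + 1` where `s ∈ {0, …, q}` is maximal such that the final `s` entries of `I` are
`(n-s, …, n-1)`; since all elements of `I` are `< n`, this condition on `s` is equivalent to
`Finset.Ico (n-s) n ⊆ I`.

STATEMENT 13: `Σ_I 2·(p^{i_1} + ⋯ + p^{i_q})·(p^{ρ(I)} − 1) ≡ 0 mod 2(p^n − 1)`.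
-/

/-- `ρ(I) = s + 1`, where `s` is the largest element of `{0, 1, …, q}` such that the final
`s` entries of `I` are `(n-s, …, n-1)`, i.e. `Finset.Ico (n-s) n ⊆ I`. -/
def rhoSeq (n q : ℕ) (I : Finset ℕ) : ℕ :=
  Nat.findGreatest (fun s => Finset.Ico (n - s) n ⊆ I) q + 1

/-- Shift a set of residues by `c`, modulo `n`. -/
def shiftMod (n c : ℕ) (I : Finset ℕ) : Finset ℕ := I.image (fun i => (i + c) % n)

/-- `σ(J) = t` is the largest element of `{0, …, q}` with `{1, …, t} ⊆ J`. -/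
def sigSeq (q : ℕ) (J : Finset ℕ) : ℕ :=
  Nat.findGreatest (fun t => Finset.Icc 1 t ⊆ J) q

lemma addModInj {n : ℕ} (c : ℕ) {a b : ℕ} (ha : a < n) (hb : b < n)
    (h : (a + c) % n = (b + c) % n) : a = b := by
  have h2 : a % n = b % n := Nat.ModEq.add_right_cancel' c h
  rwa [Nat.mod_eq_of_lt ha, Nat.mod_eq_of_lt hb] at h2

lemma shiftMod_shiftMod {n c d : ℕ} (hcd : c + d = n) {I : Finset ℕ}
    (hI : ∀ i ∈ I, i < n) : shiftMod n d (shiftMod n c I) = I := by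
  unfold shiftMod
  rw [Finset.image_image]
  have h : ∀ i ∈ I, ((i + c) % n + d) % n = i := by
    intro i hi
    have hin := hI i hi
    rw [Nat.mod_add_mod, show i + c + d = i + n by omega, Nat.add_mod_right,
      Nat.mod_eq_of_lt hin]
  calc I.image ((fun j => (j + d) % n) ∘ (fun i => (i + c) % n))
      = I.image id := Finset.image_congr (fun i hi => h i hi)
    _ = I := Finset.image_id

/-- Structural facts about `s = findGreatest (Ico (n-s) n ⊆ I) q`. -/
lemma rho_facts {n q : ℕ} (hq : 0 < q) (hqn : q < n) {I : Finset ℕ}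
    (hIs : I ⊆ Finset.Ioo 0 n) (hIc : I.card = q) :
    Nat.findGreatest (fun s => Finset.Ico (n - s) n ⊆ I) q ≤ q ∧
    Finset.Ico (n - Nat.findGreatest (fun s => Finset.Ico (n - s) n ⊆ I) q) n ⊆ I ∧
    n - (Nat.findGreatest (fun s => Finset.Ico (n - s) n ⊆ I) q + 1) ∉ I := by
  set s := Nat.findGreatest (fun s => Finset.Ico (n - s) n ⊆ I) q with hs
  have hle : s ≤ q := Nat.findGreatest_le q
  have hspec : Finset.Ico (n - s) n ⊆ I :=
    Nat.findGreatest_spec (P := fun s => Finset.Ico (n - s) n ⊆ I) (Nat.zero_le q) (by simp)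
  refine ⟨hle, hspec, ?_⟩
  intro hmem
  rcases eq_or_lt_of_le hle with heq | hlt
  · -- s = q, hence I = Ico (n-q) n
    have hcard : (Finset.Ico (n - q) n).card = q := by
      rw [Nat.card_Ico]; omega
    have hIeq : Finset.Ico (n - q) n = I :=
      Finset.eq_of_subset_of_card_le (heq ▸ hspec) (by rw [hIc, hcard])
    rw [← hIeq, Finset.mem_Ico] at hmem
    omega
  · have hgr := Nat.findGreatest_is_greatest
      (show s < s + 1 by omega) (show s + 1 ≤ q by omega)
    apply hgr
    intro a ha
    rw [Finset.mem_Ico] at ha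
    by_cases hae : a = n - (s + 1)
    · exact hae ▸ hmem
    · exact hspec (Finset.mem_Ico.mpr (by omega))

/-- Structural facts about `t = sigSeq q J`. -/
lemma sig_facts {n q : ℕ} (hq : 0 < q) (hqn : q < n) {J : Finset ℕ}
    (hJs : J ⊆ Finset.Ioo 0 n) (hJc : J.card = q) :
    sigSeq q J ≤ q ∧ Finset.Icc 1 (sigSeq q J) ⊆ J ∧ (sigSeq q J + 1) ∉ J := by
  set t := sigSeq q J with ht
  have hle : t ≤ q := Nat.findGreatest_le q
  have hspec : Finset.Icc 1 t ⊆ J :=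
    Nat.findGreatest_spec (P := fun t => Finset.Icc 1 t ⊆ J) (Nat.zero_le q) (by simp)
  refine ⟨hle, hspec, ?_⟩
  intro hmem
  rcases eq_or_lt_of_le hle with heq | hlt
  · have hcard : (Finset.Icc 1 q).card = q := by
      rw [Nat.card_Icc]; omega
    have hJeq : Finset.Icc 1 q = J :=
      Finset.eq_of_subset_of_card_le (heq ▸ hspec) (by rw [hJc, hcard])
    rw [← hJeq, Finset.mem_Icc] at hmem
    omega
  · have hgr := Nat.findGreatest_is_greatest (P := fun t => Finset.Icc 1 t ⊆ J)
      (show t < t + 1 by omega) (show t + 1 ≤ q by omega)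
    apply hgr
    intro a ha
    rw [Finset.mem_Icc] at ha
    by_cases hae : a = t + 1
    · exact hae ▸ hmem
    · exact hspec (Finset.mem_Icc.mpr (by omega))

lemma rhoSeq_le {n q : ℕ} (I : Finset ℕ) : rhoSeq n q I ≤ q + 1 := by
  unfold rhoSeq
  have := Nat.findGreatest_le (P := fun s => Finset.Ico (n - s) n ⊆ I) q
  omega

/-- The forward shift stays in the index set. -/
lemma Tmem {n q : ℕ} (hq : 0 < q) (hqn : q < n) {I : Finset ℕ}
    (hI : I ∈ (Finset.Ioo 0 n).powersetCard q) :
    shiftMod n (rhoSeq n q I) I ∈ (Finset.Ioo 0 n).powersetCard q := by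
  rw [Finset.mem_powersetCard] at hI ⊢
  obtain ⟨hIs, hIc⟩ := hI
  obtain ⟨hle, hspec, hnot⟩ := rho_facts hq hqn hIs hIc
  have hn0 : 0 < n := by omega
  have hr : rhoSeq n q I ≤ q + 1 := rhoSeq_le I
  constructor
  · intro j hj
    rw [shiftMod, Finset.mem_image] at hj
    obtain ⟨i, hi, rfl⟩ := hj
    have hi' := hIs hi
    rw [Finset.mem_Ioo] at hi'
    rw [Finset.mem_Ioo]
    refine ⟨?_, Nat.mod_lt _ hn0⟩
    by_contra h0
    have h0' : (i + rhoSeq n q I) % n = 0 := by omega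
    have hdvd : n ∣ i + rhoSeq n q I := Nat.dvd_of_mod_eq_zero h0'
    have h1 : n ≤ i + rhoSeq n q I := Nat.le_of_dvd (by omega) hdvd
    have h2 : n ∣ (i + rhoSeq n q I - n) := Nat.dvd_sub hdvd (dvd_refl n)
    have h3 : i + rhoSeq n q I - n = 0 := Nat.eq_zero_of_dvd_of_lt h2 (by omega)
    have hieq : i = n - rhoSeq n q I := by omega
    exact hnot (hieq ▸ hi)
  · rw [shiftMod, Finset.card_image_of_injOn, hIc]
    intro a ha b hb hab
    have ha' := hIs ha; have hb' := hIs hb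
    rw [Finset.mem_Ioo] at ha' hb'
    exact addModInj _ ha'.2 hb'.2 hab

lemma sig_T {n q : ℕ} (hq : 0 < q) (hqn : q < n) {I : Finset ℕ}
    (hIs : I ⊆ Finset.Ioo 0 n) (hIc : I.card = q) :
    sigSeq q (shiftMod n (rhoSeq n q I) I) + 1 = rhoSeq n q I := by
  obtain ⟨hle, hspec, hnot⟩ := rho_facts hq hqn hIs hIc
  set s := Nat.findGreatest (fun s => Finset.Ico (n - s) n ⊆ I) q with hs
  have hrho : rhoSeq n q I = s + 1 := rfl
  have hsub : Finset.Icc 1 s ⊆ shiftMod n (rhoSeq n q I) I := by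
    intro a ha
    rw [Finset.mem_Icc] at ha
    rw [shiftMod, Finset.mem_image]
    refine ⟨n - s - 1 + a, hspec (Finset.mem_Ico.mpr (by omega)), ?_⟩
    rw [hrho, show n - s - 1 + a + (s + 1) = n + a by omega, Nat.add_mod_left,
      Nat.mod_eq_of_lt (by omega)]
  have hnotmem : s + 1 ∉ shiftMod n (rhoSeq n q I) I := by
    intro hmem
    rw [shiftMod, Finset.mem_image] at hmem
    obtain ⟨i, hi, hieq⟩ := hmem
    have hi' := hIs hi
    rw [Finset.mem_Ioo] at hi'
    rcases lt_or_eq_of_le (show s + 1 ≤ n by omega) with hsn | hsn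
    · have h0 : (0 + rhoSeq n q I) % n = s + 1 := by
        rw [Nat.zero_add, hrho, Nat.mod_eq_of_lt hsn]
      have : i = 0 := addModInj _ hi'.2 (by omega) (hieq.trans h0.symm)
      omega
    · have := Nat.mod_lt (i + rhoSeq n q I) (show 0 < n by omega)
      omega
  have hgoal : Nat.findGreatest (fun t => Finset.Icc 1 t ⊆ shiftMod n (rhoSeq n q I) I) q
      = s := by
    rw [Nat.findGreatest_eq_iff]
    exact ⟨hle, fun _ => hsub,
      fun m hm hmq hsubm => hnotmem (hsubm (Finset.mem_Icc.mpr (by omega)))⟩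
  unfold sigSeq
  omega

lemma rho_U {n q : ℕ} (hq : 0 < q) (hqn : q < n) {J : Finset ℕ}
    (hJs : J ⊆ Finset.Ioo 0 n) (hJc : J.card = q) :
    rhoSeq n q (shiftMod n (n - (sigSeq q J + 1)) J) = sigSeq q J + 1 := by
  obtain ⟨hle, hspec, hnot⟩ := sig_facts hq hqn hJs hJc
  set t := sigSeq q J with ht
  set U := shiftMod n (n - (t + 1)) J with hU
  have hsub : Finset.Ico (n - t) n ⊆ U := by
    intro a ha
    rw [Finset.mem_Ico] at ha
    rw [hU, shiftMod, Finset.mem_image]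
    refine ⟨a + (t + 1) - n, hspec (Finset.mem_Icc.mpr (by omega)), ?_⟩
    rw [show a + (t + 1) - n + (n - (t + 1)) = a by omega, Nat.mod_eq_of_lt (by omega)]
  have hnotmem : n - (t + 1) ∉ U := by
    intro hmem
    rw [hU, shiftMod, Finset.mem_image] at hmem
    obtain ⟨j, hj, hjeq⟩ := hmem
    have hj' := hJs hj
    rw [Finset.mem_Ioo] at hj'
    have h0 : (0 + (n - (t + 1))) % n = n - (t + 1) := by
      rw [Nat.zero_add, Nat.mod_eq_of_lt (by omega)]
    have : j = 0 := addModInj _ hj'.2 (by omega) (hjeq.trans h0.symm)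
    omega
  have hgoal : Nat.findGreatest (fun s => Finset.Ico (n - s) n ⊆ U) q = t := by
    rw [Nat.findGreatest_eq_iff]
    exact ⟨hle, fun _ => hsub,
      fun m hm hmq hsubm => hnotmem (hsubm (Finset.mem_Ico.mpr (by omega)))⟩
  unfold rhoSeq
  omega

lemma Umem {n q : ℕ} (hq : 0 < q) (hqn : q < n) {J : Finset ℕ}
    (hJ : J ∈ (Finset.Ioo 0 n).powersetCard q) :
    shiftMod n (n - (sigSeq q J + 1)) J ∈ (Finset.Ioo 0 n).powersetCard q := by
  rw [Finset.mem_powersetCard] at hJ ⊢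
  obtain ⟨hJs, hJc⟩ := hJ
  obtain ⟨hle, hspec, hnot⟩ := sig_facts hq hqn hJs hJc
  have hn0 : 0 < n := by omega
  constructor
  · intro a ha
    rw [shiftMod, Finset.mem_image] at ha
    obtain ⟨j, hj, rfl⟩ := ha
    have hj' := hJs hj
    rw [Finset.mem_Ioo] at hj'
    rw [Finset.mem_Ioo]
    refine ⟨?_, Nat.mod_lt _ hn0⟩
    by_contra h0
    have h0' : (j + (n - (sigSeq q J + 1))) % n = 0 := by omega
    have hdvd : n ∣ j + (n - (sigSeq q J + 1)) := Nat.dvd_of_mod_eq_zero h0'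
    have h1 : n ≤ j + (n - (sigSeq q J + 1)) := Nat.le_of_dvd (by omega) hdvd
    have h2 : n ∣ (j + (n - (sigSeq q J + 1)) - n) := Nat.dvd_sub hdvd (dvd_refl n)
    have h3 : j + (n - (sigSeq q J + 1)) - n = 0 := Nat.eq_zero_of_dvd_of_lt h2 (by omega)
    have hje : j = sigSeq q J + 1 := by omega
    exact hnot (hje ▸ hj)
  · rw [shiftMod, Finset.card_image_of_injOn, hJc]
    intro a ha b hb hab
    have ha' := hJs ha; have hb' := hJs hb
    rw [Finset.mem_Ioo] at ha' hb'
    exact addModInj _ ha'.2 hb'.2 hab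

theorem statement13 (p q n : ℕ) (hp : p.Prime) (hq : 0 < q) (hqn : q < n) :
    (2 * ((p : ℤ) ^ n - 1)) ∣
      ∑ I ∈ (Finset.Ioo 0 n).powersetCard q,
        2 * (∑ i ∈ I, (p : ℤ) ^ i) * ((p : ℤ) ^ (rhoSeq n q I) - 1) := by
  have hp2 : 2 ≤ p := hp.two_le
  have hpn1 : 1 ≤ p ^ n := Nat.one_le_pow _ _ (by omega)
  have hpn2 : 2 ≤ p ^ n := by
    calc 2 = 2 ^ 1 := rfl
      _ ≤ 2 ^ n := Nat.pow_le_pow_right (by omega) (by omega)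
      _ ≤ p ^ n := Nat.pow_le_pow_left hp2 n
  set k : ℕ := p ^ n - 1 with hk
  haveI : NeZero k := ⟨by omega⟩
  have hkk : ((k : ℕ) : ℤ) = (p : ℤ) ^ n - 1 := by
    rw [hk, Nat.cast_sub hpn1]; push_cast; ring
  rw [show (2 : ℤ) * ((p : ℤ) ^ n - 1) = 2 * (k : ℤ) by rw [hkk]]
  have hsum : ∑ I ∈ (Finset.Ioo 0 n).powersetCard q,
      2 * (∑ i ∈ I, (p : ℤ) ^ i) * ((p : ℤ) ^ (rhoSeq n q I) - 1)
      = 2 * ∑ I ∈ (Finset.Ioo 0 n).powersetCard q,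
        (∑ i ∈ I, (p : ℤ) ^ i) * ((p : ℤ) ^ (rhoSeq n q I) - 1) := by
    rw [Finset.mul_sum]
    exact Finset.sum_congr rfl fun I _ => by ring
  rw [hsum]
  apply mul_dvd_mul_left
  rw [← ZMod.intCast_zmod_eq_zero_iff_dvd]
  push_cast
  have hpone : (p : ZMod k) ^ n = 1 := by
    have h1 : p ^ n = k + 1 := by omega
    have h2 : ((p ^ n : ℕ) : ZMod k) = ((k + 1 : ℕ) : ZMod k) := by rw [h1]
    push_cast at h2
    simpa [ZMod.natCast_self] using h2
  have hpow : ∀ a : ℕ, (p : ZMod k) ^ a = (p : ZMod k) ^ (a % n) := by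
    intro a
    conv_lhs => rw [← Nat.div_add_mod a n]
    rw [pow_add, pow_mul, hpone, one_pow, one_mul]
  have key : ∑ I ∈ (Finset.Ioo 0 n).powersetCard q,
        (∑ i ∈ I, (p : ZMod k) ^ i) * (p : ZMod k) ^ (rhoSeq n q I)
      = ∑ J ∈ (Finset.Ioo 0 n).powersetCard q, (∑ i ∈ J, (p : ZMod k) ^ i) := by
    refine Finset.sum_nbij' (fun I => shiftMod n (rhoSeq n q I) I)
      (fun J => shiftMod n (n - (sigSeq q J + 1)) J)
      (fun I hI => Tmem hq hqn hI) (fun J hJ => Umem hq hqn hJ) ?_ ?_ ?_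
    · intro I hI
      beta_reduce
      rw [Finset.mem_powersetCard] at hI
      obtain ⟨hIs, hIc⟩ := hI
      rw [sig_T hq hqn hIs hIc]
      exact shiftMod_shiftMod (by have := rhoSeq_le (n := n) (q := q) I; omega)
        (fun i hi => (Finset.mem_Ioo.mp (hIs hi)).2)
    · intro J hJ
      beta_reduce
      rw [Finset.mem_powersetCard] at hJ
      obtain ⟨hJs, hJc⟩ := hJ
      rw [rho_U hq hqn hJs hJc]
      exact shiftMod_shiftMod
        (by have : sigSeq q J ≤ q := Nat.findGreatest_le q; omega)
        (fun j hj => (Finset.mem_Ioo.mp (hJs hj)).2)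
    · intro I hI
      beta_reduce
      rw [Finset.mem_powersetCard] at hI
      obtain ⟨hIs, hIc⟩ := hI
      rw [shiftMod, Finset.sum_image
        (fun a ha b hb hab => addModInj _ (Finset.mem_Ioo.mp (hIs ha)).2
          (Finset.mem_Ioo.mp (hIs hb)).2 hab), Finset.sum_mul]
      exact Finset.sum_congr rfl fun i hi => by rw [← hpow, pow_add]
  calc ∑ I ∈ (Finset.Ioo 0 n).powersetCard q,
        (∑ i ∈ I, (p : ZMod k) ^ i) * ((p : ZMod k) ^ (rhoSeq n q I) - 1)
      = (∑ I ∈ (Finset.Ioo 0 n).powersetCard q,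
          (∑ i ∈ I, (p : ZMod k) ^ i) * (p : ZMod k) ^ (rhoSeq n q I))
        - ∑ I ∈ (Finset.Ioo 0 n).powersetCard q, (∑ i ∈ I, (p : ZMod k) ^ i) := by
        rw [← Finset.sum_sub_distrib]
        exact Finset.sum_congr rfl fun I _ => by ring
    _ = 0 := by rw [key, sub_self]
end
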